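/- arXiv:2603.06494 — 4 statements merged into one kernel-verified Lean document; each statement's English description precedes it below -/
import Mathlib

section
/- Let h : ℝⁿ → ℝ be differentiable and strictly convex, i.e. h(y) > h(x) + ⟪∇h(x), y - x⟫ for all y ≠ x, and let κ > 0 with α = κ. If x is safe, i.e. h(x) ≥ 0, then every goal x* ≠ x satisfying the corridor inequality -κ ⟪∇h(x), x - x*⟫ ≥ -κ h(x) is strictly safe, i.e. h(x*) > 0. -/
open scoped RealInnerProductSpace

/-- For a differentiable strictly convex barrier function `h` and
matching gain and decay rate `α = κ > 0`, every goal `x* ≠ x` in the control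
barrier corridor of a safe state `x` is strictly safe. -/
theorem strictly_safe_goals_in_control_barrier_corridor {n : ℕ}
    (h : EuclideanSpace ℝ (Fin n) → ℝ)
    (hdiff : Differentiable ℝ h)
    (hsconv : ∀ x y : EuclideanSpace ℝ (Fin n), y ≠ x →
      h y > h x + ⟪gradient h x, y - x⟫)
    (κ : ℝ) (hκ : 0 < κ)
    (x : EuclideanSpace ℝ (Fin n)) (hsafe : 0 ≤ h x)
    (xs : EuclideanSpace ℝ (Fin n)) (hne : xs ≠ x)
    (hBC : -κ * ⟪gradient h x, x - xs⟫ ≥ -κ * h x) :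
    0 < h xs := by
  have h1 : ⟪gradient h x, x - xs⟫ ≤ h x := by
    have := hBC
    nlinarith
  have h2 : ⟪gradient h x, xs - x⟫ ≥ -h x := by
    have : x - xs = -(xs - x) := by abel
    rw [this, inner_neg_right] at h1
    linarith
  have h3 := hsconv x xs hne
  linarith
end

section
/- Let h₁, …, hₘ : ℝⁿ → ℝ be differentiable convex functions, let κ > 0, and set α = κ. Let x₀ be safe, i.e. hᵢ(x₀) ≥ 0 for all i, and let x* satisfy -κ ⟪∇hᵢ(x₀), x₀ - x*⟫ ≥ -κ hᵢ(x₀) for all i. Then the closed-loop trajectory x(t) = e^{-κt} x₀ + (1 - e^{-κt}) x* is safe for all time: hᵢ(x(t)) ≥ 0 for all t ≥ 0 and all i = 1, …, m. -/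
open scoped RealInnerProductSpace

/-- For differentiable convex barrier functions `h i` and matching gain
and decay rate `α = κ > 0`, if `x₀` is safe and the goal `x*` lies in the control
barrier corridor of `x₀`, then the closed-loop trajectory
`x(t) = e^{-κt} x₀ + (1 - e^{-κt}) x*` is safe for all `t ≥ 0`. -/
theorem closed_loop_trajectory_safe {n m : ℕ}
    (h : Fin m → EuclideanSpace ℝ (Fin n) → ℝ)
    (hdiff : ∀ i, Differentiable ℝ (h i))
    (hconv : ∀ i (x y : EuclideanSpace ℝ (Fin n)),
      h i y ≥ h i x + ⟪gradient (h i) x, y - x⟫)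
    (κ : ℝ) (hκ : 0 < κ)
    (x₀ : EuclideanSpace ℝ (Fin n)) (hsafe : ∀ i, 0 ≤ h i x₀)
    (xs : EuclideanSpace ℝ (Fin n))
    (hBC : ∀ i, -κ * ⟪gradient (h i) x₀, x₀ - xs⟫ ≥ -κ * h i x₀) :
    ∀ t : ℝ, 0 ≤ t → ∀ i,
      0 ≤ h i (Real.exp (-κ * t) • x₀ + (1 - Real.exp (-κ * t)) • xs) := by
  intro t ht i
  set s : ℝ := 1 - Real.exp (-κ * t) with hs
  have he : Real.exp (-κ * t) ≤ 1 := by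
    apply Real.exp_le_one_iff.mpr
    nlinarith [mul_nonneg hκ.le ht]
  have hs0 : 0 ≤ s := by rw [hs]; linarith [he]
  have hs1 : s ≤ 1 := by
    have := Real.exp_pos (-κ * t); rw [hs]; linarith
  have key : ⟪gradient (h i) x₀, xs - x₀⟫ ≥ -(h i x₀) := by
    have := hBC i
    have h1 : ⟪gradient (h i) x₀, x₀ - xs⟫ ≤ h i x₀ := by
      nlinarith [this]
    have h2 : ⟪gradient (h i) x₀, xs - x₀⟫ = -⟪gradient (h i) x₀, x₀ - xs⟫ := by
      rw [← inner_neg_right]; congr 1; abel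
    linarith [h1, h2.ge, h2.le]
  have hpt : Real.exp (-κ * t) • x₀ + (1 - Real.exp (-κ * t)) • xs
      = x₀ + s • (xs - x₀) := by
    rw [hs]
    module
  rw [hpt]
  have hc := hconv i x₀ (x₀ + s • (xs - x₀))
  have hin : ⟪gradient (h i) x₀, (x₀ + s • (xs - x₀)) - x₀⟫
      = s * ⟪gradient (h i) x₀, xs - x₀⟫ := by
    rw [show (x₀ + s • (xs - x₀)) - x₀ = s • (xs - x₀) by abel, inner_smul_right]
  rw [hin] at hc
  nlinarith [hsafe i, hc, key]
end

section
/- Let h : ℝⁿ → ℝ be twice continuously differentiable and convex, let κ > 0, and set α = κ. Suppose h(x₀) ≥ 0 and the goal x* satisfies the corridor inequality -κ ⟪∇h(x₀), x₀ - x*⟫ + κ h(x₀) ≥ 0. Then along the closed-loop trajectory x(t) = e^{-κt} x₀ + (1 - e^{-κt}) x*, the goal remains in the corridor for all future times: the goal-control barrier function h_{x*}(x(t)) = -κ ⟪∇h(x(t)), x(t) - x*⟫ + κ h(x(t)) satisfies h_{x*}(x(t)) ≥ 0 for all t ≥ 0. -/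
open scoped RealInnerProductSpace

/-- Gradient inequality for convex differentiable functions. -/
lemma grad_ineq_aux {n : ℕ} (h : EuclideanSpace ℝ (Fin n) → ℝ)
    (hd : Differentiable ℝ h) (hconv : ConvexOn ℝ Set.univ h)
    (x y : EuclideanSpace ℝ (Fin n)) :
    ⟪gradient h x, y - x⟫ ≤ h y - h x := by
  set c : ℝ → EuclideanSpace ℝ (Fin n) := fun u => x + u • (y - x) with hc
  have hcd : ∀ u : ℝ, HasDerivAt c (y - x) u := by
    intro u
    have : HasDerivAt (fun u : ℝ => u • (y - x)) ((1 : ℝ) • (y - x)) u :=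
      (hasDerivAt_id u).smul_const (y - x)
    simpa [c] using this.const_add x
  have hφd : ∀ u : ℝ, HasDerivAt (h ∘ c) ⟪gradient h (c u), y - x⟫ u := by
    intro u
    have := ((hd (c u)).hasGradientAt.hasFDerivAt).comp_hasDerivAt u (hcd u)
    simpa [InnerProductSpace.toDual_apply_apply] using this
  have hφconv : ConvexOn ℝ Set.univ (h ∘ c) := by
    have := hconv.comp_affineMap (AffineMap.lineMap x y)
    simp only [Set.preimage_univ] at this
    suffices e : h ∘ c = h ∘ ⇑(AffineMap.lineMap x y) by rw [e]; exact this
    funext u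
    simp [c, AffineMap.lineMap_apply, add_comm]
  have := hφconv.le_slope_of_hasDerivAt (Set.mem_univ (0:ℝ)) (Set.mem_univ (1:ℝ))
    one_pos (hφd 0)
  have hs : slope (h ∘ c) 0 1 = h y - h x := by
    simp [slope_def_field, c]
  rw [hs] at this
  simpa [c] using this

/-- For a twice continuously differentiable convex barrier function `h`
and matching gain and decay rate `α = κ > 0`, if `h x₀ ≥ 0` and the goal `x*`
satisfies the corridor inequality at `x₀`, then along the closed-loop trajectory
`x(t) = e^{-κt} x₀ + (1 - e^{-κt}) x*` the goal-control barrier function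
`h_{x*}(x) = -κ ⟪∇h(x), x - x*⟫ + κ h(x)` remains nonnegative for all `t ≥ 0`. -/
theorem goal_remains_in_corridor {n : ℕ}
    (h : EuclideanSpace ℝ (Fin n) → ℝ)
    (hsmooth : ContDiff ℝ 2 h)
    (hconv : ConvexOn ℝ Set.univ h)
    (κ : ℝ) (hκ : 0 < κ)
    (x₀ xs : EuclideanSpace ℝ (Fin n)) (hsafe : 0 ≤ h x₀)
    (hBC : 0 ≤ -κ * ⟪gradient h x₀, x₀ - xs⟫ + κ * h x₀) :
    ∀ t : ℝ, 0 ≤ t →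
      0 ≤ -κ * ⟪gradient h (Real.exp (-κ * t) • x₀ + (1 - Real.exp (-κ * t)) • xs),
              (Real.exp (-κ * t) • x₀ + (1 - Real.exp (-κ * t)) • xs) - xs⟫
          + κ * h (Real.exp (-κ * t) • x₀ + (1 - Real.exp (-κ * t)) • xs) := by
  have hd : Differentiable ℝ h := hsmooth.differentiable (by norm_num)
  intro t ht
  rcases ht.eq_or_lt with heq | ht'
  · subst heq
    simpa using hBC
  · set s : ℝ := Real.exp (-κ * t) with hsdef
    have hs0 : 0 < s := Real.exp_pos _
    have hs1 : s < 1 := by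
      rw [hsdef, Real.exp_lt_one_iff]
      nlinarith
    set X : EuclideanSpace ℝ (Fin n) := s • x₀ + (1 - s) • xs with hXdef
    set v : EuclideanSpace ℝ (Fin n) := x₀ - xs with hvdef
    have hXxs : X - xs = s • v := by rw [hXdef, hvdef]; module
    have hXx0 : x₀ - X = (1 - s) • v := by rw [hXdef, hvdef]; module
    have hx0X : X - x₀ = (s - 1) • v := by rw [hXdef, hvdef]; module
    have I1 := grad_ineq_aux h hd hconv X x₀
    rw [hXx0, real_inner_smul_right] at I1
    have I2 := grad_ineq_aux h hd hconv x₀ X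
    rw [hx0X, real_inner_smul_right] at I2
    rw [hXxs, real_inner_smul_right]
    set a : ℝ := ⟪gradient h x₀, v⟫
    set b : ℝ := ⟪gradient h X, v⟫
    have hC : a ≤ h x₀ := by
      have hmul : κ * a ≤ κ * h x₀ := by linarith
      exact le_of_mul_le_mul_left hmul hκ
    have hab : b ≤ a := by nlinarith
    have hHb : s * b ≤ h X := by nlinarith
    nlinarith [mul_nonneg hκ.le (sub_nonneg.mpr hHb)]
end

section
/- Let h : ℝⁿ → ℝ be twice continuously differentiable with positive semidefinite Hessian ∇²h, let κ > 0 and α = κ, and let x(t) = e^{-κt} x₀ + (1 - e^{-κt}) x*. Then the function φ(t) = -κ ⟪∇h(x(t)), x(t) - x*⟫ + κ h(x(t)) is differentiable with φ'(t) = κ² ⟪x(t) - x*, ∇²h(x(t)) (x(t) - x*)⟫ ≥ 0 for all t; in particular φ is nondecreasing. -/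
open scoped RealInnerProductSpace

private lemma gcbf_aux {n : ℕ}
    (h : EuclideanSpace ℝ (Fin n) → ℝ)
    (hsmooth : ContDiff ℝ 2 h)
    (κ : ℝ)
    (x₀ xs : EuclideanSpace ℝ (Fin n)) (t : ℝ) :
    HasDerivAt
      (fun s : ℝ =>
        -κ * ⟪gradient h (Real.exp (-κ * s) • x₀ + (1 - Real.exp (-κ * s)) • xs),
            (Real.exp (-κ * s) • x₀ + (1 - Real.exp (-κ * s)) • xs) - xs⟫
          + κ * h (Real.exp (-κ * s) • x₀ + (1 - Real.exp (-κ * s)) • xs))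
      (κ ^ 2 * ⟪(Real.exp (-κ * t) • x₀ + (1 - Real.exp (-κ * t)) • xs) - xs,
          fderiv ℝ (fun z => gradient h z)
            (Real.exp (-κ * t) • x₀ + (1 - Real.exp (-κ * t)) • xs)
            ((Real.exp (-κ * t) • x₀ + (1 - Real.exp (-κ * t)) • xs) - xs)⟫) t := by
  let u : ℝ → EuclideanSpace ℝ (Fin n) :=
    fun s => Real.exp (-κ * s) • x₀ + (1 - Real.exp (-κ * s)) • xs
  let w : EuclideanSpace ℝ (Fin n) := u t - xs
  let v : EuclideanSpace ℝ (Fin n) := (-κ) • w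
  -- derivative of the trajectory
  have he : HasDerivAt (fun s : ℝ => Real.exp (-κ * s)) (-κ * Real.exp (-κ * t)) t := by
    simpa [mul_comm] using (((hasDerivAt_id t).const_mul (-κ)).exp)
  have hut : HasDerivAt u v t := by
    have h1 : HasDerivAt u
        ((-κ * Real.exp (-κ * t)) • x₀ + (0 - (-κ * Real.exp (-κ * t))) • xs) t :=
      (he.smul_const x₀).add (((hasDerivAt_const t (1:ℝ)).sub he).smul_const xs)
    convert h1 using 1
    show (-κ) • ((Real.exp (-κ * t) • x₀ + (1 - Real.exp (-κ * t)) • xs) - xs) = _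
    module
  -- gradient is C¹
  have hgrad : ContDiff ℝ 1 (fun z : EuclideanSpace ℝ (Fin n) => gradient h z) := by
    have h1 : ContDiff ℝ 1 (fderiv ℝ h) := hsmooth.fderiv_right (le_refl 2)
    exact ((InnerProductSpace.toDual ℝ (EuclideanSpace ℝ (Fin n))).symm.contDiff).comp h1
  set F := fderiv ℝ (fun z : EuclideanSpace ℝ (Fin n) => gradient h z) (u t) with hF
  have hG : HasDerivAt (fun s => gradient h (u s)) (F v) t :=
    ((hgrad.differentiable one_ne_zero (u t)).hasFDerivAt).comp_hasDerivAt t hut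
  have hsub : HasDerivAt (fun s => u s - xs) v t := hut.sub_const xs
  have hinner : HasDerivAt (fun s => ⟪gradient h (u s), u s - xs⟫)
      (⟪gradient h (u t), v⟫ + ⟪F v, u t - xs⟫) t := hG.inner ℝ hsub
  have hhd : HasDerivAt (fun s => h (u s)) (⟪gradient h (u t), v⟫) t := by
    have hgAt : HasGradientAt h (gradient h (u t)) (u t) :=
      ((hsmooth.differentiable (by norm_num)) (u t)).hasGradientAt
    have := hgAt.hasFDerivAt.comp_hasDerivAt t hut
    simpa [InnerProductSpace.toDual_apply_apply, Function.comp_def] using this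
  have hcomb := (hinner.const_mul (-κ)).add (hhd.const_mul κ)
  have hval : -κ * (⟪gradient h (u t), v⟫ + ⟪F v, u t - xs⟫)
      + κ * ⟪gradient h (u t), v⟫ = κ ^ 2 * ⟪w, F w⟫ := by
    have h1 : F v = (-κ) • F w := by
      show F ((-κ) • w) = _
      rw [map_smul]
    rw [h1, real_inner_smul_left]
    rw [show ⟪F w, u t - xs⟫ = ⟪w, F w⟫ from real_inner_comm _ _]
    ring
  rw [hval] at hcomb
  exact hcomb

/-- For a `C²` barrier function `h` with positive semidefinite Hessian
(`∇²h`, realized as the Fréchet derivative of the gradient) and `α = κ > 0`, along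
the trajectory `x(t) = e^{-κt} x₀ + (1 - e^{-κt}) x*` the goal-control barrier
function `φ(t) = -κ ⟪∇h(x(t)), x(t) - x*⟫ + κ h(x(t))` is differentiable with
`φ'(t) = κ² ⟪x(t) - x*, ∇²h(x(t)) (x(t) - x*)⟫ ≥ 0`; in particular `φ` is
nondecreasing. -/
theorem goal_control_barrier_derivative_nonneg {n : ℕ}
    (h : EuclideanSpace ℝ (Fin n) → ℝ)
    (hsmooth : ContDiff ℝ 2 h)
    (hpsd : ∀ y v : EuclideanSpace ℝ (Fin n),
      0 ≤ ⟪v, fderiv ℝ (fun z => gradient h z) y v⟫)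
    (κ : ℝ) (hκ : 0 < κ)
    (x₀ xs : EuclideanSpace ℝ (Fin n)) :
    (∀ t : ℝ,
      HasDerivAt
        (fun s : ℝ =>
          -κ * ⟪gradient h (Real.exp (-κ * s) • x₀ + (1 - Real.exp (-κ * s)) • xs),
              (Real.exp (-κ * s) • x₀ + (1 - Real.exp (-κ * s)) • xs) - xs⟫
            + κ * h (Real.exp (-κ * s) • x₀ + (1 - Real.exp (-κ * s)) • xs))
        (κ ^ 2 * ⟪(Real.exp (-κ * t) • x₀ + (1 - Real.exp (-κ * t)) • xs) - xs,
            fderiv ℝ (fun z => gradient h z)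
              (Real.exp (-κ * t) • x₀ + (1 - Real.exp (-κ * t)) • xs)
              ((Real.exp (-κ * t) • x₀ + (1 - Real.exp (-κ * t)) • xs) - xs)⟫) t ∧
      0 ≤ κ ^ 2 * ⟪(Real.exp (-κ * t) • x₀ + (1 - Real.exp (-κ * t)) • xs) - xs,
            fderiv ℝ (fun z => gradient h z)
              (Real.exp (-κ * t) • x₀ + (1 - Real.exp (-κ * t)) • xs)
              ((Real.exp (-κ * t) • x₀ + (1 - Real.exp (-κ * t)) • xs) - xs)⟫) ∧
    Monotone (fun s : ℝ =>
      -κ * ⟪gradient h (Real.exp (-κ * s) • x₀ + (1 - Real.exp (-κ * s)) • xs),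
          (Real.exp (-κ * s) • x₀ + (1 - Real.exp (-κ * s)) • xs) - xs⟫
        + κ * h (Real.exp (-κ * s) • x₀ + (1 - Real.exp (-κ * s)) • xs)) := by
  have key := fun t => gcbf_aux h hsmooth κ x₀ xs t
  have nn : ∀ t : ℝ, 0 ≤ κ ^ 2 * ⟪(Real.exp (-κ * t) • x₀ + (1 - Real.exp (-κ * t)) • xs) - xs,
      fderiv ℝ (fun z => gradient h z)
        (Real.exp (-κ * t) • x₀ + (1 - Real.exp (-κ * t)) • xs)
        ((Real.exp (-κ * t) • x₀ + (1 - Real.exp (-κ * t)) • xs) - xs)⟫ :=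
    fun t => mul_nonneg (by positivity) (hpsd _ _)
  refine ⟨fun t => ⟨key t, nn t⟩, ?_⟩
  apply monotone_of_deriv_nonneg
  · exact fun t => (key t).differentiableAt
  · intro t
    rw [(key t).deriv]
    exact nn t
end
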